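/- arXiv:1809.04761 — 3 statements merged into one kernel-verified Lean document; each statement's English description precedes it below -/
import Mathlib

section
/- Let f : Γ → Γ be an immersion of a finite graph. Suppose every edge of the subgraph Z ⊆ Γ of non-expanding edges has eventually periodic f-orbit. Then there exists K ≥ 1 such that for all k ≥ K and all points x, y lying in edges of Z, f^k(x) = f^k(y) implies f^{k−1}(x) = f^{k−1}(y). -/
/-- A finite combinatorial (Serre) graph: a finite set of vertices and a finite set of
oriented edges with a fixed-point-free involution `bar` (orientation reversal) and an
initial-vertex map `ι`. -/
structure CGraph where
  V : Type
  E : Type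
  [fV : Fintype V]
  [fE : Fintype E]
  [dV : DecidableEq V]
  [dE : DecidableEq E]
  ι : E → V
  bar : E → E
  bar_bar : ∀ e, bar (bar e) = e
  bar_ne : ∀ e, bar e ≠ e

attribute [instance] CGraph.fV CGraph.fE CGraph.dV CGraph.dE

namespace CGraph

variable (G : CGraph)

/-- Terminal vertex of an edge. -/
def τ (e : G.E) : G.V := G.ι (G.bar e)

/-- A list of edges is an edge path if consecutive edges are composable. -/
def IsPath (l : List G.E) : Prop := l.Chain' fun e e' => G.τ e = G.ι e'

/-- A path is reduced (immersed) if it has no backtracking. -/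
def IsReduced (l : List G.E) : Prop :=
  IsPath G l ∧ l.Chain' fun e e' => e' ≠ G.bar e

/-- The path `l` starts at the vertex `v`. -/
def StartsAt (l : List G.E) (v : G.V) : Prop := ∀ e ∈ l.head?, G.ι e = v

/-- The path `l` ends at the vertex `v`. -/
def EndsAt (l : List G.E) (v : G.V) : Prop := ∀ e ∈ l.getLast?, G.τ e = v

/-- A nontrivial closed edge path based at `v`. -/
def IsBasedLoopAt (l : List G.E) (v : G.V) : Prop :=
  l ≠ [] ∧ IsPath G l ∧ StartsAt G l v ∧ EndsAt G l v

/-- A nontrivial closed edge path (at some vertex). -/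
def IsCircuit (l : List G.E) : Prop :=
  l ≠ [] ∧ IsPath G l ∧ ∃ v, StartsAt G l v ∧ EndsAt G l v

/-- A circuit is cyclically reduced if it is reduced and there is no backtracking
around the basepoint. -/
def IsCyclicallyReduced (l : List G.E) : Prop :=
  IsReduced G l ∧ ∀ a ∈ l.head?, ∀ b ∈ l.getLast?, a ≠ G.bar b

/-- Elementary reduction of an edge path: deleting a backtracking pair. -/
def ReduceStep (l l' : List G.E) : Prop :=
  ∃ (l₁ l₂ : List G.E) (e : G.E), l = l₁ ++ e :: G.bar e :: l₂ ∧ l' = l₁ ++ l₂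

/-- The combinatorial length of a path after tightening (free reduction)
rel its endpoints. -/
noncomputable def redLen (l : List G.E) : ℕ :=
  sInf {n | ∃ l', Relation.ReflTransGen (ReduceStep G) l l' ∧
    (¬ ∃ l'', ReduceStep G l' l'') ∧ l'.length = n}

/-- One step of free homotopy of loops: an elementary reduction, its inverse,
or a cyclic rotation. -/
def FreeStep (l l' : List G.E) : Prop :=
  ReduceStep G l l' ∨ ReduceStep G l' l ∨ ∃ n, l' = l.rotate n

/-- Two closed edge paths are freely homotopic. -/
def FreelyHomotopic (l l' : List G.E) : Prop :=
  Relation.ReflTransGen (FreeStep G) l l'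

/-- The `d`-th power (concatenation) of a closed path. -/
def pow (l : List G.E) (d : ℕ) : List G.E := (List.replicate d l).flatten

/-- The valence of a vertex: the number of oriented edges emanating from it. -/
def valence (v : G.V) : ℕ := Fintype.card {e : G.E // G.ι e = v}

/-- The graph is connected. -/
def Conn : Prop :=
  ∀ u v : G.V, u = v ∨ ∃ l, l ≠ [] ∧ IsPath G l ∧ StartsAt G l u ∧ EndsAt G l v

/-- A (topological) graph map `Γ → Γ`: vertices to vertices, each edge to a nontrivial
edge path, compatibly with endpoints and orientation reversal. -/
structure GMap (G : CGraph) where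
  vmap : G.V → G.V
  emap : G.E → List G.E
  emap_ne : ∀ e, emap e ≠ []
  emap_path : ∀ e, IsPath G (emap e)
  emap_start : ∀ e, StartsAt G (emap e) (vmap (G.ι e))
  emap_bar : ∀ e, emap (G.bar e) = ((emap e).map G.bar).reverse

/-- The induced map of a graph map on edge paths. -/
def onPaths (F : GMap G) (l : List G.E) : List G.E := l.flatMap F.emap

/-- The `n`-th iterate `f^n` applied to an edge path. -/
def iterMap (F : GMap G) (n : ℕ) (l : List G.E) : List G.E := (onPaths G F)^[n] l

/-- A graph map is an immersion: it is locally injective, i.e. each edge maps to a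
reduced path and the derivative map on directions at each vertex is injective. -/
def IsImmersion (F : GMap G) : Prop :=
  (∀ e, IsReduced G (F.emap e)) ∧
  ∀ e₁ e₂ : G.E, G.ι e₁ = G.ι e₂ → (F.emap e₁).head? = (F.emap e₂).head? → e₁ = e₂

end CGraph

namespace CGraph

variable (G : CGraph)

/-- Points of the geometric realization of `G`: a point interior to an edge `e` at
parameter `t ∈ (0,1)`, or a vertex when `t ∈ {0,1}`. -/
abbrev Pt (G : CGraph) := G.E × ℝ

/-- `p` represents a vertex. -/
def IsVertexPt (p : Pt G) : Prop := p.2 = 0 ∨ p.2 = 1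

open Classical in
/-- The vertex represented by a point with parameter `0` or `1`. -/
noncomputable def ptVertex (p : Pt G) : G.V := if p.2 ≤ 0 then G.ι p.1 else G.τ p.1

/-- Two parametrized points represent the same point of the geometric realization. -/
def PtEq (p q : Pt G) : Prop :=
  p = q ∨ (q.1 = G.bar p.1 ∧ q.2 = 1 - p.2) ∨
    (IsVertexPt G p ∧ IsVertexPt G q ∧ ptVertex G p = ptVertex G q)

/-- The map induced by a graph map on points of the geometric realization, where each
edge is mapped across its image path with uniform speed. -/
noncomputable def ptMap (F : GMap G) : Pt G → Pt G := fun p =>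
  let l := F.emap p.1
  let m := l.length
  let j : ℕ := min (m - 1) (⌊(m : ℝ) * p.2⌋.toNat)
  (l.getD j p.1, (m : ℝ) * p.2 - (j : ℝ))

/-- An edge is non-expanding if the combinatorial lengths of its iterated images are
uniformly bounded. -/
def NonExpanding (F : GMap G) (e : G.E) : Prop :=
  ∃ B : ℕ, ∀ n : ℕ, (iterMap G F n [e]).length ≤ B

end CGraph

open CGraph

/-! Lengths of the paths `f^n(e)` never decrease, so once the orbit of a non-expanding edge `e`
is periodic, every edge of `f^n(e)` is mapped onto a single edge. From then on `f` moves the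
points of `e` by the self-map `firstEdge` of the finite edge set, keeping the parameter. That
self-map is eventually periodic, with some period `P`, so for large `k` we have
`f^(k-1) = f^(P-1) ∘ f^k` on these points, and `f^(P-1)` respects the identifications of the
realization there. -/

lemma Function.exists_iterate_add_eq_iterate {α : Type*} [Finite α] (f : α → α) :
    ∃ a P, 1 ≤ P ∧ ∀ m ≥ a, f^[m + P] = f^[m] := by
  obtain ⟨a, b, hne, h⟩ := Finite.exists_ne_map_eq_of_infinite fun n : ℕ => f^[n]
  wlog hab : a < b generalizing a b
  · exact this b a hne.symm h.symm (by omega)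
  refine ⟨a, b - a, by omega, fun m hm => ?_⟩
  have := congrArg (f^[m - a] ∘ ·) h
  simp only [← Function.iterate_add] at this
  rwa [show m - a + a = m by omega, show m - a + b = m + (b - a) by omega, eq_comm] at this

namespace CGraph

variable {G : CGraph} {F : GMap G}

lemma iterMap_succ (F : GMap G) (n : ℕ) (l : List G.E) :
    iterMap G F (n + 1) l = onPaths G F (iterMap G F n l) :=
  Function.iterate_succ_apply' _ _ _

lemma length_le_length_onPaths (F : GMap G) (l : List G.E) :
    l.length ≤ (onPaths G F l).length := by
  induction l with
  | nil => simp [onPaths]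
  | cons g l ih =>
    have := List.length_pos_iff.mpr (F.emap_ne g)
    simp only [onPaths, List.flatMap_cons, List.length_append, List.length_cons] at ih ⊢
    omega

lemma length_emap_eq_one_of_length_onPaths_le {l : List G.E}
    (h : (onPaths G F l).length ≤ l.length) : ∀ g ∈ l, (F.emap g).length = 1 := by
  induction l with
  | nil => simp
  | cons g l ih =>
    have hg := List.length_pos_iff.mpr (F.emap_ne g)
    have hl := length_le_length_onPaths F l
    simp only [onPaths, List.flatMap_cons, List.length_append, List.length_cons] at h hl
    rintro g' (_ | ⟨_, hg'⟩)
    · omega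
    · exact ih (by simp only [onPaths]; omega) g' hg'

lemma monotone_length_iterMap (F : GMap G) (l : List G.E) :
    Monotone fun n => (iterMap G F n l).length :=
  monotone_nat_of_le_succ fun n => by
    simpa only [iterMap_succ] using length_le_length_onPaths F (iterMap G F n l)

/-- Lengths never decrease under `f`, so a path in a periodic orbit cannot contain an edge
whose image has two or more edges. -/
lemma length_emap_eq_one_of_iterMap_periodic {l : List G.E} {N p : ℕ} (hp : 1 ≤ p)
    (hper : ∀ n ≥ N, iterMap G F (n + p) l = iterMap G F n l) {n : ℕ} (hn : N ≤ n) :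
    ∀ g ∈ iterMap G F n l, (F.emap g).length = 1 := by
  apply length_emap_eq_one_of_length_onPaths_le
  rw [← iterMap_succ]
  calc (iterMap G F (n + 1) l).length ≤ (iterMap G F (n + p) l).length :=
        monotone_length_iterMap F l (by omega)
    _ = (iterMap G F n l).length := by rw [hper n hn]

lemma GMap.endsAt_emap (F : GMap G) (g : G.E) : EndsAt G (F.emap g) (F.vmap (G.τ g)) := by
  intro x hx
  refine F.emap_start (G.bar g) (G.bar x) ?_
  rw [F.emap_bar, List.head?_reverse, List.getLast?_map, Option.mem_def.mp hx]
  rfl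

noncomputable def firstEdge (F : GMap G) (g : G.E) : G.E := (F.emap g).getD 0 g

lemma emap_eq_singleton {g : G.E} (h : (F.emap g).length = 1) :
    F.emap g = [firstEdge F g] := by
  obtain ⟨a, ha⟩ := List.length_eq_one_iff.mp h
  simp [firstEdge, ha]

lemma firstEdge_bar {g : G.E} (h : (F.emap g).length = 1) :
    firstEdge F (G.bar g) = G.bar (firstEdge F g) := by
  rw [firstEdge, F.emap_bar, emap_eq_singleton h]
  simp

lemma ptMap_of_length_emap_eq_one {g : G.E} (h : (F.emap g).length = 1) (s : ℝ) :
    ptMap G F (g, s) = (firstEdge F g, s) := by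
  simp [ptMap, h, firstEdge]

lemma ptMap_fst_mem (F : GMap G) (p : Pt G) : (ptMap G F p).1 ∈ F.emap p.1 := by
  have := List.length_pos_iff.mpr (F.emap_ne p.1)
  simp only [ptMap]
  rw [List.getD_eq_getElem _ _ (by omega)]
  exact List.getElem_mem _

lemma iterate_ptMap_fst_mem_iterMap (F : GMap G) (p : Pt G) (n : ℕ) :
    ((ptMap G F)^[n] p).1 ∈ iterMap G F n [p.1] := by
  induction n with
  | zero => simp [iterMap]
  | succ n ih =>
    rw [Function.iterate_succ_apply', iterMap_succ]
    exact List.mem_flatMap.mpr ⟨_, ih, ptMap_fst_mem F _⟩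

lemma ptMap_zero (F : GMap G) (g : G.E) : ptMap G F (g, 0) = (firstEdge F g, 0) := by
  simp [ptMap, firstEdge]

lemma ptMap_one (F : GMap G) (g : G.E) :
    ptMap G F (g, 1) = ((F.emap g).getLast (F.emap_ne g), 1) := by
  have := List.length_pos_iff.mpr (F.emap_ne g)
  simp only [ptMap, mul_one, Int.floor_natCast, Int.toNat_natCast]
  rw [min_eq_left (Nat.sub_le _ _), List.getD_eq_getElem _ _ (by omega),
    List.getLast_eq_getElem, Nat.cast_sub this]
  simp

lemma ptMap_vertex {p : Pt G} (hp : IsVertexPt G p) :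
    IsVertexPt G (ptMap G F p) ∧ ptVertex G (ptMap G F p) = F.vmap (ptVertex G p) := by
  obtain ⟨g, s⟩ := p
  rcases hp with rfl | rfl
  · refine ⟨by simp [ptMap_zero, IsVertexPt], ?_⟩
    simp only [ptMap_zero, ptVertex, le_refl, if_true]
    obtain ⟨a, l, hl⟩ := List.exists_cons_of_ne_nil (F.emap_ne g)
    exact F.emap_start g _ (by simp [firstEdge, hl])
  · refine ⟨by simp [ptMap_one, IsVertexPt], ?_⟩
    simp only [ptMap_one, ptVertex, if_neg (show ¬(1 : ℝ) ≤ 0 by norm_num)]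
    exact F.endsAt_emap g _ (List.getLast?_eq_some_getLast _)

lemma ptEq_ptMap {p q : Pt G} (hp : (F.emap p.1).length = 1) (h : PtEq G p q) :
    PtEq G (ptMap G F p) (ptMap G F q) := by
  obtain ⟨g, s⟩ := p
  rcases h with rfl | ⟨hq₁, hq₂⟩ | ⟨hvp, hvq, hv⟩
  · exact Or.inl rfl
  · obtain ⟨g', s'⟩ := q
    simp only at hq₁ hq₂ hp
    subst hq₁ hq₂
    rw [ptMap_of_length_emap_eq_one hp, ptMap_of_length_emap_eq_one
      (by simpa [F.emap_bar] using hp), firstEdge_bar hp]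
    exact Or.inr (Or.inl ⟨rfl, rfl⟩)
  · obtain ⟨hvp', hp'⟩ := ptMap_vertex (F := F) hvp
    obtain ⟨hvq', hq'⟩ := ptMap_vertex (F := F) hvq
    exact Or.inr (Or.inr ⟨hvp', hvq', by rw [hp', hq', hv]⟩)

lemma ptEq_iterate_ptMap {p q : Pt G}
    (hp : ∀ i, (F.emap ((ptMap G F)^[i] p).1).length = 1) (h : PtEq G p q) (m : ℕ) :
    PtEq G ((ptMap G F)^[m] p) ((ptMap G F)^[m] q) := by
  induction m with
  | zero => exact h
  | succ m ih =>
    rw [Function.iterate_succ_apply', Function.iterate_succ_apply']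
    exact ptEq_ptMap (hp m) ih

lemma iterate_ptMap_eq_firstEdge {p : Pt G}
    (hp : ∀ i, (F.emap ((ptMap G F)^[i] p).1).length = 1) (m : ℕ) :
    (ptMap G F)^[m] p = ((firstEdge F)^[m] p.1, p.2) := by
  induction m with
  | zero => rfl
  | succ m ih =>
    have hm := hp m
    rw [ih] at hm
    rw [Function.iterate_succ_apply', ih, ptMap_of_length_emap_eq_one hm,
      Function.iterate_succ_apply']

lemma eventually_length_emap_eq_one
    (hper : ∀ e : G.E, NonExpanding G F e →
      ∃ N p, 1 ≤ p ∧ ∀ n ≥ N, iterMap G F (n + p) [e] = iterMap G F n [e]) :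
    ∃ N, ∀ n ≥ N, ∀ e, NonExpanding G F e → ∀ t : ℝ,
      (F.emap ((ptMap G F)^[n] (e, t)).1).length = 1 := by
  have : ∀ᶠ n in Filter.atTop, ∀ e, NonExpanding G F e →
      ∀ g ∈ iterMap G F n [e], (F.emap g).length = 1 := by
    refine Filter.eventually_all.2 fun e => ?_
    by_cases he : NonExpanding G F e
    · obtain ⟨N, p, hp, hper⟩ := hper e he
      filter_upwards [Filter.eventually_ge_atTop N] with n hn
      exact fun _ => length_emap_eq_one_of_iterMap_periodic hp hper hn
    · exact Filter.Eventually.of_forall fun _ h => absurd h he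
  obtain ⟨N, hN⟩ := Filter.eventually_atTop.1 this
  exact ⟨N, fun n hn e he t => hN n hn e he _ (iterate_ptMap_fst_mem_iterMap F (e, t) n)⟩

lemma iterate_ptMap_add_period {p : Pt G} {N a P : ℕ}
    (hp : ∀ n ≥ N, (F.emap ((ptMap G F)^[n] p).1).length = 1)
    (hP : ∀ m ≥ a, (firstEdge F)^[m + P] = (firstEdge F)^[m]) {n : ℕ} (hn : N + a ≤ n) :
    (ptMap G F)^[n + P] p = (ptMap G F)^[n] p := by
  have hq : ∀ i, (F.emap ((ptMap G F)^[i] ((ptMap G F)^[N] p)).1).length = 1 := fun i => by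
    rw [← Function.iterate_add_apply]
    exact hp _ (by omega)
  obtain ⟨m, rfl⟩ := Nat.exists_eq_add_of_le (le_trans (Nat.le_add_right N a) hn)
  rw [show N + m + P = m + P + N by omega, show N + m = m + N by omega,
    Function.iterate_add_apply _ (m + P) N, Function.iterate_add_apply _ m N,
    iterate_ptMap_eq_firstEdge hq (m + P), iterate_ptMap_eq_firstEdge hq m, hP m (by omega)]

end CGraph

theorem nonexpanding_eventually_injective_general (G : CGraph) (F : GMap G)
    (hper : ∀ e : G.E, NonExpanding G F e →
      ∃ N p, 1 ≤ p ∧ ∀ n ≥ N, iterMap G F (n + p) [e] = iterMap G F n [e]) :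
    ∃ K ≥ 1, ∀ k ≥ K, ∀ (e e' : G.E) (t t' : ℝ),
      NonExpanding G F e → NonExpanding G F e' →
      t ∈ Set.Icc (0 : ℝ) 1 → t' ∈ Set.Icc (0 : ℝ) 1 →
      PtEq G ((ptMap G F)^[k] (e, t)) ((ptMap G F)^[k] (e', t')) →
      PtEq G ((ptMap G F)^[k - 1] (e, t)) ((ptMap G F)^[k - 1] (e', t')) := by
  obtain ⟨N, hsimple⟩ := eventually_length_emap_eq_one hper
  obtain ⟨a, P, hP, hperiod⟩ := Function.exists_iterate_add_eq_iterate (firstEdge F)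
  refine ⟨N + a + 1, by omega, fun k hk e e' t t' he he' _ _ hk_eq => ?_⟩
  have back : ∀ e t, NonExpanding G F e →
      (ptMap G F)^[k - 1] (e, t) = (ptMap G F)^[P - 1] ((ptMap G F)^[k] (e, t)) := by
    intro e t he
    rw [← Function.iterate_add_apply, show P - 1 + k = k - 1 + P by omega,
      iterate_ptMap_add_period (fun n hn => hsimple n hn e he t) hperiod (by omega)]
  rw [back e t he, back e' t' he']
  refine ptEq_iterate_ptMap (fun i => ?_) hk_eq (P - 1)
  rw [← Function.iterate_add_apply]
  exact hsimple _ (by omega) e he t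

/-- Let `f : Γ → Γ` be an immersion of a finite graph such that every non-expanding edge
has eventually periodic `f`-orbit. Then there is `K ≥ 1` such that for all `k ≥ K` and all
points `x`, `y` lying in non-expanding edges, `f^k(x) = f^k(y)` implies
`f^{k-1}(x) = f^{k-1}(y)` (in the geometric realization). -/
theorem nonexpanding_eventually_injective (G : CGraph) (F : GMap G) (hF : IsImmersion G F)
    (hper : ∀ e : G.E, NonExpanding G F e →
      ∃ N p, 1 ≤ p ∧ ∀ n ≥ N, iterMap G F (n + p) [e] = iterMap G F n [e]) :
    ∃ K ≥ 1, ∀ k ≥ K, ∀ (e e' : G.E) (t t' : ℝ),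
      NonExpanding G F e → NonExpanding G F e' →
      t ∈ Set.Icc (0 : ℝ) 1 → t' ∈ Set.Icc (0 : ℝ) 1 →
      PtEq G ((ptMap G F)^[k] (e, t)) ((ptMap G F)^[k] (e', t')) →
      PtEq G ((ptMap G F)^[k - 1] (e, t)) ((ptMap G F)^[k - 1] (e', t')) :=
  nonexpanding_eventually_injective_general G F hper
end

section
/- Let f : Γ → Γ be an immersion of a finite connected core graph with no invariant loop of degree 1 (atoroidal). Then f is (2,n)-hyperbolic for some n ≥ 1: for every nontrivial based loop σ in Γ, either 2·l(f^n(σ)) ≤ l(f^{2n}(σ)) or 2·l(f^n(σ)) ≤ l(σ), where l denotes combinatorial length after tightening rel basepoint. -/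
/-!
An immersion maps reduced paths to reduced paths, so the tightened length of `f^n(σ)` is the
length of `f^n(ρ)` for the reduced form `ρ` of `σ`, and `ρ` is a reduced circuit.

Call an edge bounded if the lengths of its images `f^n(e)` stay bounded. A cyclically reduced
circuit of bounded edges has only finitely many possible images, so two of its iterates coincide
and it is an invariant loop, which atoroidality forbids. Hence a reduced path of bounded edges
visits no vertex twice and has at most `|V|` edges, and every reduced circuit has an unbounded
edge. Once `f^N` stretches every unbounded edge to length `≥ 2|V| + 2`, each unbounded edge pays
for the at most `|V|` bounded edges after it, so `f^N` at least doubles the length of every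
reduced circuit; applied to `f^N(ρ)` this gives the first alternative.
-/

namespace List

theorem IsChain.and {α : Type*} {R S : α → α → Prop} {l : List α} (hR : l.IsChain R)
    (hS : l.IsChain S) : l.IsChain (fun a b => R a b ∧ S a b) :=
  isChain_iff_getElem.2 fun i h => ⟨isChain_iff_getElem.1 hR i h, isChain_iff_getElem.1 hS i h⟩

variable {α : Type*} (p : α → Prop) (g : α → ℕ) (K : ℕ)

/-- Each element failing `p` pays for the run of `p`-elements that follows it; only the leading
run `l.takeWhile p` is left unpaid. -/
theorem two_mul_length_add_mul_countP_le [DecidablePred p] {l : List α}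
    (hg : ∀ a ∈ l, 1 ≤ g a) (hg' : ∀ a ∈ l, ¬ p a → 2 * K + 2 ≤ g a)
    (hrun : ∀ s, s <:+: l → (∀ a ∈ s, p a) → s.length ≤ K) :
    2 * l.length + K * l.countP (fun a => !decide (p a)) ≤
      (l.map g).sum + (l.takeWhile (p ·)).length := by
  induction l with
  | nil => simp
  | cons a t ih =>
    have ih := ih (fun b hb => hg b (mem_cons_of_mem a hb))
      (fun b hb => hg' b (mem_cons_of_mem a hb))
      (fun s hs => hrun s (hs.trans (suffix_cons a t).isInfix))
    by_cases ha : p a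
    · have := hg a mem_cons_self
      simp only [length_cons, countP_cons, map_cons, sum_cons, takeWhile_cons, ha, decide_true,
        Bool.not_true, Bool.false_eq_true, ↓reduceIte, add_zero]
      omega
    · have hr : (t.takeWhile (p ·)).length ≤ K :=
        hrun _ ((takeWhile_prefix _).isInfix.trans (suffix_cons a t).isInfix)
          (fun b hb => by simpa using mem_takeWhile_imp hb)
      have := hg' a mem_cons_self ha
      simp only [length_cons, countP_cons, map_cons, sum_cons, takeWhile_cons, ha, decide_false,
        Bool.not_false, ↓reduceIte]
      linarith

theorem two_mul_length_le_sum_map {l : List α}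
    (hg : ∀ a ∈ l, 1 ≤ g a) (hg' : ∀ a ∈ l, ¬ p a → 2 * K + 2 ≤ g a)
    (hrun : ∀ s, s <:+: l → (∀ a ∈ s, p a) → s.length ≤ K) (hex : ∃ a ∈ l, ¬ p a) :
    2 * l.length ≤ (l.map g).sum := by
  classical
  have key := two_mul_length_add_mul_countP_le p g K hg hg' hrun
  have hK : K ≤ K * l.countP (fun a => !decide (p a)) := by
    obtain ⟨a, ha, hpa⟩ := hex
    exact Nat.le_mul_of_pos_right K (countP_pos_iff.2 ⟨a, ha, by simpa using hpa⟩)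
  have hrun' : (l.takeWhile (p ·)).length ≤ K :=
    hrun _ (takeWhile_prefix _).isInfix (fun b hb => by simpa using mem_takeWhile_imp hb)
  omega

end List

namespace CGraph

open List Relation

variable {G : CGraph}

attribute [simp] CGraph.bar_bar

@[simp] lemma τ_bar (e : G.E) : G.τ (G.bar e) = G.ι e := by simp [τ]

lemma isPath_iff {l : List G.E} : IsPath G l ↔ l.IsChain (fun e e' => G.τ e = G.ι e') := Iff.rfl

lemma isReduced_iff {l : List G.E} :
    IsReduced G l ↔ IsPath G l ∧ l.IsChain (fun e e' => e' ≠ G.bar e) := Iff.rfl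

lemma IsReduced.infix {l s : List G.E} (h : IsReduced G l) (hs : s <:+: l) : IsReduced G s :=
  ⟨h.1.infix hs, h.2.infix hs⟩

lemma IsPath.endsAt_of_append_cons {l₁ l₂ : List G.E} {e : G.E} (h : IsPath G (l₁ ++ e :: l₂)) :
    EndsAt G l₁ (G.ι e) :=
  fun x hx => (isChain_append.1 h).2.2 x hx e rfl

lemma isCircuit_iff {l : List G.E} : IsCircuit G l ↔ l ≠ [] ∧ IsPath G (l ++ l) := by
  simp only [IsCircuit, isPath_iff, isChain_append, StartsAt, EndsAt]
  constructor
  · rintro ⟨hne, hp, v, hs, he⟩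
    exact ⟨hne, hp, hp, fun x hx y hy => (he x hx).trans (hs y hy).symm⟩
  · rintro ⟨hne, hp, -, hjoin⟩
    obtain ⟨a, t, rfl⟩ := exists_cons_of_ne_nil hne
    exact ⟨hne, hp, G.ι a, fun e he => by simp_all, fun x hx => hjoin x hx a rfl⟩

lemma IsCircuit.of_isBasedLoopAt {l : List G.E} {v : G.V} (h : IsBasedLoopAt G l v) :
    IsCircuit G l :=
  ⟨h.1, h.2.1, v, h.2.2⟩

lemma IsCircuit.isCyclicallyReduced_iff {l : List G.E} (hl : IsCircuit G l) :
    IsCyclicallyReduced G l ↔ IsReduced G (l ++ l) := by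
  have hp := (isCircuit_iff.1 hl).2
  simp only [IsCyclicallyReduced, isReduced_iff, isChain_append, hp, true_and]
  constructor
  · rintro ⟨⟨-, h⟩, hcyc⟩
    exact ⟨h, h, fun x hx y hy => hcyc y hy x hx⟩
  · rintro ⟨h, -, hjoin⟩
    exact ⟨⟨hp.left_of_append, h⟩, fun a ha b hb => hjoin b hb a ha⟩

lemma IsBasedLoopAt.exists_subset_isCyclicallyReduced {l : List G.E} {v : G.V}
    (hl : IsBasedLoopAt G l v) (hr : l.IsChain (fun e e' => e' ≠ G.bar e)) :
    ∃ w ⊆ l, IsCircuit G w ∧ IsCyclicallyReduced G w := by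
  by_cases hcyc : ∀ a ∈ l.head?, ∀ b ∈ l.getLast?, a ≠ G.bar b
  · exact ⟨l, Subset.refl l, .of_isBasedLoopAt hl, ⟨hl.2.1, hr⟩, hcyc⟩
  obtain ⟨hne, hp, -, -⟩ := hl
  obtain ⟨a, t, rfl⟩ := exists_cons_of_ne_nil hne
  -- `l` backtracks at its basepoint: `l = a :: m ++ [ā]`, and `m` is a shorter reduced loop.
  rcases eq_nil_or_concat t with rfl | ⟨m, b, rfl⟩
  · simp [(G.bar_ne a).symm] at hcyc
  rw [concat_eq_append] at *
  have hab : G.bar a = b := by simp_all [getLast?_cons]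
  have hm : m ≠ [] := by
    rintro rfl
    simp [hab] at hr
  have hinf : m <:+: a :: (m ++ [b]) := ⟨[a], [b], rfl⟩
  have hloop : IsBasedLoopAt G m (G.τ a) := by
    refine ⟨hm, hp.infix hinf, fun e he => ?_, fun e he => ?_⟩
    · exact ((isChain_cons.1 hp).1 e (by rwa [head?_append_of_ne_nil _ hm])).symm
    · have hend := IsPath.endsAt_of_append_cons (l₁ := a :: m) (l₂ := []) (by simpa using hp)
      rw [← hab] at hend
      exact hend e (by rwa [getLast?_cons_of_ne_nil hm])
  obtain ⟨w, hw, hwc⟩ := hloop.exists_subset_isCyclicallyReduced (hr.infix hinf)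
  exact ⟨w, List.Subset.trans hw hinf.subset, hwc⟩
termination_by l.length

lemma IsPath.exists_infix_isBasedLoopAt {l : List G.E} (hp : IsPath G l)
    (h : ¬ (l.map G.ι).Nodup) : ∃ w v, w <:+: l ∧ IsBasedLoopAt G w v := by
  induction l with
  | nil => simp at h
  | cons a t ih =>
    rw [map_cons, nodup_cons, not_and_or, not_not] at h
    rcases h with h | h
    · obtain ⟨b, hb, hba⟩ := mem_map.1 h
      obtain ⟨s, u, rfl⟩ := append_of_mem hb
      have hp' : IsPath G ((a :: s) ++ b :: u) := hp
      refine ⟨a :: s, G.ι a, (prefix_append _ _).isInfix, cons_ne_nil _ _,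
        hp'.left_of_append, by simp [StartsAt], hba ▸ hp'.endsAt_of_append_cons⟩
    · obtain ⟨w, v, hw, hloop⟩ := ih hp.tail h
      exact ⟨w, v, hw.trans (suffix_cons a t).isInfix, hloop⟩

lemma ReduceStep.length_eq {l l' : List G.E} (h : ReduceStep G l l') :
    l.length = l'.length + 2 := by
  obtain ⟨l₁, l₂, e, rfl, rfl⟩ := h
  simp; omega

lemma ReduceStep.append_left {l l' : List G.E} (h : ReduceStep G l l') (m : List G.E) :
    ReduceStep G (m ++ l) (m ++ l') := by
  obtain ⟨l₁, l₂, e, rfl, rfl⟩ := h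
  exact ⟨m ++ l₁, l₂, e, by simp, by simp⟩

lemma ReduceStep.append_right {l l' : List G.E} (h : ReduceStep G l l') (m : List G.E) :
    ReduceStep G (l ++ m) (l' ++ m) := by
  obtain ⟨l₁, l₂, e, rfl, rfl⟩ := h
  exact ⟨l₁, l₂ ++ m, e, by simp, by simp⟩

lemma not_exists_reduceStep_iff {l : List G.E} :
    (¬ ∃ l', ReduceStep G l l') ↔ l.IsChain (fun e e' => e' ≠ G.bar e) := by
  rw [isChain_iff_forall_rel_of_append_cons_cons]
  constructor
  · rintro h a b l₁ l₂ rfl rfl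
    exact h ⟨_, l₁, l₂, a, rfl, rfl⟩
  · rintro h ⟨_, l₁, l₂, e, rfl, -⟩
    exact h rfl rfl

lemma exists_reflTransGen_irreducible (l : List G.E) :
    ∃ ρ, ReflTransGen (ReduceStep G) l ρ ∧ ¬ ∃ l', ReduceStep G ρ l' := by
  by_cases h : ∃ l', ReduceStep G l l'
  · obtain ⟨l', hl'⟩ := h
    have := hl'.length_eq
    obtain ⟨ρ, h₁, h₂⟩ := exists_reflTransGen_irreducible l'
    exact ⟨ρ, .head hl' h₁, h₂⟩
  · exact ⟨l, .refl, h⟩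
termination_by l.length

/-- Two cancellations in the same path are equal, overlap in `e ē e` (and give the same path),
or are disjoint and commute. -/
lemma reduceStep_join_of_append_eq : ∀ {l₁ m₁ l₂ m₂ : List G.E} {e f : G.E},
    l₁.length ≤ m₁.length → l₁ ++ e :: G.bar e :: l₂ = m₁ ++ f :: G.bar f :: m₂ →
    ∃ d, ReflGen (ReduceStep G) (l₁ ++ l₂) d ∧ ReflGen (ReduceStep G) (m₁ ++ m₂) d
  | [], [], _, _, _, _, _, h => by
    simp only [nil_append, cons.injEq] at h
    obtain ⟨rfl, -, rfl⟩ := h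
    exact ⟨_, .refl, .refl⟩
  | [], [_], _, _, _, _, _, h => by
    simp only [nil_append, cons_append, cons.injEq] at h
    obtain ⟨rfl, rfl, rfl⟩ := h
    exact ⟨_, .refl, by simpa using .refl⟩
  | [], _ :: _ :: k, _, m₂, e, f, _, h => by
    simp only [nil_append, cons_append, cons.injEq] at h
    obtain ⟨rfl, rfl, rfl⟩ := h
    exact ⟨k ++ m₂, .single ⟨k, m₂, f, rfl, rfl⟩, .single ⟨[], k ++ m₂, e, rfl, rfl⟩⟩
  | _ :: _, [], _, _, _, _, hlen, _ => by simp at hlen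
  | a :: l₁, _ :: m₁, _, _, _, _, hlen, h => by
    simp only [length_cons, Nat.add_le_add_iff_right, cons_append, cons.injEq] at hlen h
    obtain ⟨rfl, h⟩ := h
    have hcons : ∀ {x y}, ReflGen (ReduceStep G) x y →
        ReflGen (ReduceStep G) (a :: x) (a :: y) := by
      rintro _ _ (_ | h)
      exacts [.refl, .single (h.append_left [a])]
    obtain ⟨d, h₁, h₂⟩ := reduceStep_join_of_append_eq hlen h
    exact ⟨a :: d, hcons h₁, hcons h₂⟩

lemma eq_of_reflTransGen_of_irreducible {l ρ₁ ρ₂ : List G.E}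
    (h₁ : ReflTransGen (ReduceStep G) l ρ₁) (h₂ : ReflTransGen (ReduceStep G) l ρ₂)
    (hρ₁ : ¬ ∃ l', ReduceStep G ρ₁ l') (hρ₂ : ¬ ∃ l', ReduceStep G ρ₂ l') : ρ₁ = ρ₂ := by
  have hdiamond : ∀ a b c, ReduceStep G a b → ReduceStep G a c →
      ∃ d, ReflGen (ReduceStep G) b d ∧ ReflTransGen (ReduceStep G) c d := by
    rintro _ _ _ ⟨l₁, l₂, e, rfl, rfl⟩ ⟨m₁, m₂, f, h, rfl⟩
    rcases le_total l₁.length m₁.length with hlen | hlen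
    · obtain ⟨d, hb, hc⟩ := reduceStep_join_of_append_eq hlen h
      exact ⟨d, hb, hc.to_reflTransGen⟩
    · obtain ⟨d, hc, hb⟩ := reduceStep_join_of_append_eq hlen h.symm
      exact ⟨d, hb, hc.to_reflTransGen⟩
  obtain ⟨d, hd₁, hd₂⟩ := church_rosser hdiamond h₁ h₂
  have irreducible_eq : ∀ {ρ}, (¬ ∃ l', ReduceStep G ρ l') →
      ReflTransGen (ReduceStep G) ρ d → ρ = d := fun hρ h =>
    h.cases_head.resolve_right fun ⟨x, hx, _⟩ => hρ ⟨x, hx⟩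
  rw [irreducible_eq hρ₁ hd₁, irreducible_eq hρ₂ hd₂]

lemma redLen_eq_length {l ρ : List G.E} (h : ReflTransGen (ReduceStep G) l ρ)
    (hρ : ¬ ∃ l', ReduceStep G ρ l') : redLen G l = ρ.length := by
  have hset : {n | ∃ l', ReflTransGen (ReduceStep G) l l' ∧
      (¬ ∃ l'', ReduceStep G l' l'') ∧ l'.length = n} = {ρ.length} := by
    ext n
    constructor
    · rintro ⟨l', h', hl', rfl⟩
      rw [eq_of_reflTransGen_of_irreducible h' h hl' hρ, Set.mem_singleton_iff]
    · rintro rfl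
      exact ⟨ρ, h, hρ, rfl⟩
  rw [redLen, hset, csInf_singleton]

lemma ReduceStep.isPath {l l' : List G.E} (h : ReduceStep G l l') (hp : IsPath G l) :
    IsPath G l' := by
  obtain ⟨l₁, l₂, e, rfl, rfl⟩ := h
  rw [isPath_iff, isChain_append] at hp ⊢
  obtain ⟨h₁, h₂, h₁₂⟩ := hp
  obtain ⟨-, hjoin, h₂⟩ := isChain_cons_cons.1 h₂ |>.imp_right isChain_cons.1
  refine ⟨h₁, h₂, fun x hx y hy => ?_⟩
  rw [h₁₂ x hx e rfl, ← τ_bar, hjoin y hy]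

lemma reflTransGen_append_reverse_map_bar (w : List G.E) :
    ReflTransGen (ReduceStep G) (w ++ (w.map G.bar).reverse) [] := by
  induction w with
  | nil => exact .refl
  | cons x w ih =>
    have h := ih.lift (fun m => x :: (m ++ [G.bar x]))
      fun _ _ h => (h.append_right _).append_left [x]
    simpa using h.tail ⟨[], [], x, rfl, rfl⟩

lemma IsPath.of_reflTransGen {l l' : List G.E} (hp : IsPath G l)
    (h : ReflTransGen (ReduceStep G) l l') : IsPath G l' := by
  induction h with
  | refl => exact hp
  | tail _ hstep ih => exact hstep.isPath ih

lemma ReduceStep.reflTransGen_append_self {l l' : List G.E} (h : ReduceStep G l l') :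
    ReflTransGen (ReduceStep G) (l ++ l) (l' ++ l') :=
  .head (h.append_right l) (.single (h.append_left l'))

lemma IsCircuit.of_reflTransGen {l ρ : List G.E} (hl : IsCircuit G l)
    (h : ReflTransGen (ReduceStep G) l ρ) (hρ : ρ ≠ []) : IsCircuit G ρ := by
  rw [isCircuit_iff] at hl ⊢
  exact ⟨hρ, hl.2.of_reflTransGen
    (h.lift' (fun l => l ++ l) fun _ _ h => h.reflTransGen_append_self)⟩

lemma IsCircuit.exists_reflTransGen_isReduced {σ : List G.E} (hσ : IsCircuit G σ)
    (h0 : redLen G σ ≠ 0) :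
    ∃ ρ, ReflTransGen (ReduceStep G) σ ρ ∧ IsCircuit G ρ ∧ IsReduced G ρ := by
  obtain ⟨ρ, hσρ, hρ⟩ := exists_reflTransGen_irreducible σ
  have hne : ρ ≠ [] := by
    rintro rfl
    exact h0 (redLen_eq_length hσρ hρ)
  have hc := hσ.of_reflTransGen hσρ hne
  exact ⟨ρ, hσρ, hc, hc.2.1, not_exists_reduceStep_iff.1 hρ⟩

section Map

variable (F : GMap G)

@[simp] lemma onPaths_cons (e : G.E) (l : List G.E) :
    onPaths G F (e :: l) = F.emap e ++ onPaths G F l :=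
  flatMap_cons

@[simp] lemma onPaths_append (l₁ l₂ : List G.E) :
    onPaths G F (l₁ ++ l₂) = onPaths G F l₁ ++ onPaths G F l₂ :=
  flatMap_append

lemma onPaths_ne_nil {l : List G.E} (h : l ≠ []) : onPaths G F l ≠ [] := by
  obtain ⟨e, t, rfl⟩ := exists_cons_of_ne_nil h
  simp [F.emap_ne e]

lemma emap_endsAt (e : G.E) : EndsAt G (F.emap e) (F.vmap (G.τ e)) := by
  intro b hb
  apply F.emap_start (G.bar e) (G.bar b)
  rw [F.emap_bar, head?_reverse, getLast?_map, hb]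
  rfl

lemma isChain_onPaths {R S : G.E → G.E → Prop} (hR : ∀ e, (F.emap e).IsChain R)
    (hS : ∀ e e', S e e' → ∀ x ∈ (F.emap e).getLast?, ∀ y ∈ (F.emap e').head?, R x y)
    {l : List G.E} (hl : l.IsChain S) : (onPaths G F l).IsChain R := by
  have hnil : [] ∉ l.map F.emap := by simpa using fun e _ => (F.emap_ne e).symm
  rw [onPaths, flatMap_def, isChain_flatten hnil, isChain_map]
  exact ⟨by simpa using fun e _ => hR e, hl.imp hS⟩

lemma IsPath.onPaths {l : List G.E} (h : IsPath G l) : IsPath G (onPaths G F l) :=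
  isChain_onPaths F F.emap_path
    (fun e e' hee' x hx y hy => by rw [emap_endsAt F e x hx, F.emap_start e' y hy, hee']) h

lemma IsImmersion.ne_bar_of_head?_of_getLast? (hF : IsImmersion G F) {e e' : G.E}
    (hee' : G.τ e = G.ι e') (hne : e' ≠ G.bar e) :
    ∀ x ∈ (F.emap e).getLast?, ∀ y ∈ (F.emap e').head?, y ≠ G.bar x := by
  rintro x hx y hy rfl
  refine hne (hF.2 e' (G.bar e) (by simp [← hee', τ]) ?_)
  rw [hy, F.emap_bar, head?_reverse, getLast?_map, hx]
  rfl

lemma IsReduced.onPaths (hF : IsImmersion G F) {l : List G.E} (h : IsReduced G l) :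
    IsReduced G (onPaths G F l) :=
  ⟨h.1.onPaths F, isChain_onPaths F (fun e => (hF.1 e).2)
    (fun _ _ h => hF.ne_bar_of_head?_of_getLast? F h.1 h.2) (h.1.and h.2)⟩

lemma IsCircuit.onPaths {l : List G.E} (h : IsCircuit G l) : IsCircuit G (onPaths G F l) := by
  rw [isCircuit_iff] at h ⊢
  exact ⟨onPaths_ne_nil F h.1, by simpa using h.2.onPaths F⟩

lemma IsCyclicallyReduced.onPaths (hF : IsImmersion G F) {l : List G.E} (hl : IsCircuit G l)
    (h : IsCyclicallyReduced G l) : IsCyclicallyReduced G (onPaths G F l) := by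
  rw [(hl.onPaths F).isCyclicallyReduced_iff, ← onPaths_append]
  exact (hl.isCyclicallyReduced_iff.1 h).onPaths F hF

lemma ReduceStep.reflTransGen_onPaths {l l' : List G.E} (h : ReduceStep G l l') :
    ReflTransGen (ReduceStep G) (onPaths G F l) (onPaths G F l') := by
  obtain ⟨l₁, l₂, e, rfl, rfl⟩ := h
  have h := (reflTransGen_append_reverse_map_bar (F.emap e)).lift
    (fun m => onPaths G F l₁ ++ (m ++ onPaths G F l₂))
    fun _ _ h => (h.append_right _).append_left _
  simpa [Function.onFun, F.emap_bar] using h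

lemma reflTransGen_iterMap {l l' : List G.E} (h : ReflTransGen (ReduceStep G) l l') (n : ℕ) :
    ReflTransGen (ReduceStep G) (iterMap G F n l) (iterMap G F n l') := by
  induction n with
  | zero => exact h
  | succ n ih =>
    simpa only [iterMap, Function.iterate_succ_apply'] using
      ih.lift' (onPaths G F) fun _ _ h => h.reflTransGen_onPaths F

lemma iterMap_iterMap (m n : ℕ) (l : List G.E) :
    iterMap G F m (iterMap G F n l) = iterMap G F (m + n) l :=
  (Function.iterate_add_apply _ m n l).symm

@[simp] lemma iterMap_nil (n : ℕ) : iterMap G F n [] = [] :=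
  Function.iterate_fixed rfl n

lemma iterMap_append (n : ℕ) (l₁ l₂ : List G.E) :
    iterMap G F n (l₁ ++ l₂) = iterMap G F n l₁ ++ iterMap G F n l₂ :=
  Function.Semiconj₂.iterate (f := onPaths G F) (onPaths_append F) n l₁ l₂

lemma iterMap_ne_nil {l : List G.E} (h : l ≠ []) (n : ℕ) : iterMap G F n l ≠ [] :=
  Function.Iterate.rec (· ≠ []) h (fun _ => onPaths_ne_nil F) n

lemma IsReduced.iterMap (hF : IsImmersion G F) {l : List G.E} (h : IsReduced G l) (n : ℕ) :
    IsReduced G (iterMap G F n l) :=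
  Function.Iterate.rec (IsReduced G) h (fun _ h => h.onPaths F hF) n

lemma IsCircuit.iterMap {l : List G.E} (h : IsCircuit G l) (n : ℕ) :
    IsCircuit G (iterMap G F n l) :=
  Function.Iterate.rec (IsCircuit G) h (fun _ h => h.onPaths F) n

lemma IsCyclicallyReduced.iterMap (hF : IsImmersion G F) {l : List G.E} (hl : IsCircuit G l)
    (h : IsCyclicallyReduced G l) (n : ℕ) :
    IsCircuit G (iterMap G F n l) ∧ IsCyclicallyReduced G (iterMap G F n l) :=
  Function.Iterate.rec (fun l => IsCircuit G l ∧ IsCyclicallyReduced G l) ⟨hl, h⟩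
    (fun _ h => ⟨h.1.onPaths F, h.2.onPaths F hF h.1⟩) n

lemma redLen_iterMap (hF : IsImmersion G F) {σ ρ : List G.E}
    (h : ReflTransGen (ReduceStep G) σ ρ) (hρ : IsReduced G ρ) (n : ℕ) :
    redLen G (iterMap G F n σ) = (iterMap G F n ρ).length :=
  redLen_eq_length (reflTransGen_iterMap F h n) (not_exists_reduceStep_iff.2 (hρ.iterMap F hF n).2)

def imageLength (n : ℕ) (e : G.E) : ℕ := (iterMap G F n [e]).length

lemma length_iterMap (n : ℕ) (l : List G.E) :
    (iterMap G F n l).length = (l.map (imageLength F n)).sum := by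
  induction l with
  | nil => simp
  | cons e t ih => rw [← singleton_append, iterMap_append, length_append, ih]; rfl

lemma one_le_imageLength (n : ℕ) (e : G.E) : 1 ≤ imageLength F n e :=
  length_pos_iff.2 (iterMap_ne_nil F (cons_ne_nil e []) n)

lemma imageLength_mono (e : G.E) : Monotone (imageLength F · e) := by
  refine monotone_nat_of_le_succ fun n => ?_
  have h := length_le_sum_of_one_le ((iterMap G F n [e]).map (imageLength F 1))
    (by simpa using fun e _ => one_le_imageLength F 1 e)
  rwa [length_map, ← length_iterMap, iterMap_iterMap, add_comm] at h

def IsBoundedEdge (e : G.E) : Prop := BddAbove (Set.range (imageLength F · e))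

lemma exists_imageLength_le : ∃ B, ∀ e, IsBoundedEdge F e → ∀ n, imageLength F n e ≤ B := by
  have : ∀ e, ∃ B, IsBoundedEdge F e → ∀ n, imageLength F n e ≤ B := by
    intro e
    by_cases he : IsBoundedEdge F e
    · obtain ⟨B, hB⟩ := he
      exact ⟨B, fun _ n => hB ⟨n, rfl⟩⟩
    · exact ⟨0, fun h => absurd h he⟩
  choose B hB using this
  obtain ⟨M, hM⟩ := Finite.exists_le B
  exact ⟨M, fun e he n => (hB e he n).trans (hM e)⟩

lemma exists_le_imageLength (M : ℕ) :
    ∃ N ≥ 1, ∀ e, ¬ IsBoundedEdge F e → M ≤ imageLength F N e := by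
  have : ∀ e, ∃ n, ¬ IsBoundedEdge F e → M ≤ imageLength F n e := by
    intro e
    by_cases he : IsBoundedEdge F e
    · exact ⟨0, fun h => absurd he h⟩
    · obtain ⟨_, ⟨n, rfl⟩, hn⟩ := not_bddAbove_iff.1 he M
      exact ⟨n, fun _ => hn.le⟩
  choose n hn using this
  obtain ⟨N, hN⟩ := Finite.exists_le n
  exact ⟨N + 1, Nat.le_add_left 1 N,
    fun e he => (hn e he).trans (imageLength_mono F e ((hN e).trans N.le_succ))⟩

def IsAtoroidal : Prop :=
  ¬ ∃ k ≥ 1, ∃ σ : List G.E, IsCircuit G σ ∧ IsCyclicallyReduced G σ ∧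
    FreelyHomotopic G (iterMap G F k σ) σ

lemma IsAtoroidal.exists_not_isBoundedEdge (hat : IsAtoroidal F) (hF : IsImmersion G F)
    {w : List G.E} (hw : IsCircuit G w) (hcr : IsCyclicallyReduced G w) :
    ∃ e ∈ w, ¬ IsBoundedEdge F e := by
  by_contra! hb
  obtain ⟨B, hB⟩ := exists_imageLength_le F
  have hfin : {l : List G.E | l.length ≤ w.length * B}.Finite := List.finite_length_le _ _
  obtain ⟨i, j, hij, heq⟩ := hfin.exists_lt_map_eq_of_forall_mem
    (f := fun n => iterMap G F n w) fun n => by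
      simpa [length_iterMap] using
        sum_le_card_nsmul (w.map (imageLength F n)) B (by simpa using fun e he => hB e (hb e he) n)
  obtain ⟨hc, hcr⟩ := hcr.iterMap F hF hw i
  refine hat ⟨j - i, by omega, _, hc, hcr, ?_⟩
  rw [iterMap_iterMap, Nat.sub_add_cancel hij.le]
  exact heq ▸ .refl

lemma IsAtoroidal.length_le_card (hat : IsAtoroidal F) (hF : IsImmersion G F)
    {l : List G.E} (hr : IsReduced G l) (hb : ∀ e ∈ l, IsBoundedEdge F e) :
    l.length ≤ Fintype.card G.V := by
  by_contra! hlong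
  have hdup : ¬ (l.map G.ι).Nodup := fun h => by simpa using h.length_le_card.trans_lt hlong
  obtain ⟨w, v, hw, hloop⟩ := hr.1.exists_infix_isBasedLoopAt hdup
  obtain ⟨w', hw', hc, hcr⟩ := hloop.exists_subset_isCyclicallyReduced (hr.2.infix hw)
  obtain ⟨e, he, hunb⟩ := hat.exists_not_isBoundedEdge F hF hc hcr
  exact hunb (hb e (hw.subset (hw' he)))

lemma IsAtoroidal.exists_two_mul_length_le_length_iterMap (hat : IsAtoroidal F)
    (hF : IsImmersion G F) :
    ∃ N ≥ 1, ∀ l, IsCircuit G l → IsReduced G l → 2 * l.length ≤ (iterMap G F N l).length := by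
  obtain ⟨N, hN, hlarge⟩ := exists_le_imageLength F (2 * Fintype.card G.V + 2)
  refine ⟨N, hN, fun l hc hr => ?_⟩
  obtain ⟨hne, hp, v, hs, he⟩ := hc
  obtain ⟨w, hw, hwc, hwcr⟩ :=
    IsBasedLoopAt.exists_subset_isCyclicallyReduced ⟨hne, hp, hs, he⟩ hr.2
  obtain ⟨e, he, hunb⟩ := hat.exists_not_isBoundedEdge F hF hwc hwcr
  rw [length_iterMap]
  exact two_mul_length_le_sum_map (IsBoundedEdge F) (imageLength F N) _
    (fun e _ => one_le_imageLength F N e) (fun e _ => hlarge e)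
    (fun s hs => hat.length_le_card F hF (hr.infix hs)) ⟨e, hw he, hunb⟩

end Map

end CGraph

open CGraph

theorem atoroidal_immersion_is_hyperbolic_general (G : CGraph) (F : GMap G) (hF : IsImmersion G F)
    (hatoroidal : ¬ ∃ k ≥ 1, ∃ σ : List G.E, IsCircuit G σ ∧ IsCyclicallyReduced G σ ∧
      FreelyHomotopic G (iterMap G F k σ) σ) :
    ∃ n ≥ 1, ∀ (v : G.V) (σ : List G.E), IsBasedLoopAt G σ v → redLen G σ ≠ 0 →
      2 * redLen G (iterMap G F n σ) ≤ redLen G (iterMap G F (2 * n) σ) ∨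
      2 * redLen G (iterMap G F n σ) ≤ redLen G σ := by
  obtain ⟨N, hN, hdouble⟩ :=
    IsAtoroidal.exists_two_mul_length_le_length_iterMap F hatoroidal hF
  refine ⟨N, hN, fun v σ hσ h0 => Or.inl ?_⟩
  obtain ⟨ρ, hσρ, hc, hr⟩ := (IsCircuit.of_isBasedLoopAt hσ).exists_reflTransGen_isReduced h0
  rw [redLen_iterMap F hF hσρ hr, redLen_iterMap F hF hσρ hr, two_mul N, ← iterMap_iterMap]
  exact hdouble _ (hc.iterMap F N) (hr.iterMap F hF N)

/-- Brinkmann-type lemma for immersions: an immersion of a finite connected core graph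
with no invariant loop of degree 1 (atoroidal) is `(2,n)`-hyperbolic for some `n ≥ 1`:
for every nontrivial based loop `σ`, either `2·l(f^n(σ)) ≤ l(f^{2n}(σ))` or
`2·l(f^n(σ)) ≤ l(σ)`, where `l` is combinatorial length after tightening rel basepoint. -/
theorem atoroidal_immersion_is_hyperbolic (G : CGraph) (F : GMap G) (hF : IsImmersion G F)
    (hconn : Conn G) (hcore : ∀ v : G.V, valence G v ≠ 1)
    (hatoroidal : ¬ ∃ k ≥ 1, ∃ σ : List G.E, IsCircuit G σ ∧ IsCyclicallyReduced G σ ∧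
      FreelyHomotopic G (iterMap G F k σ) σ) :
    ∃ n ≥ 1, ∀ (v : G.V) (σ : List G.E), IsBasedLoopAt G σ v → redLen G σ ≠ 0 →
      2 * redLen G (iterMap G F n σ) ≤ redLen G (iterMap G F (2 * n) σ) ∨
      2 * redLen G (iterMap G F n σ) ≤ redLen G σ :=
  atoroidal_immersion_is_hyperbolic_general G F hF hatoroidal
end

section
/- Let F_2 = ⟨a,b⟩ and φ : F_2 → F_2 the Sapir endomorphism φ(a) = ab, φ(b) = ba. Then for all k, d ≥ 1 and every nontrivial g ∈ F_2, φ^k(g) is not conjugate to g^d in F_2. -/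
/-- The Sapir endomorphism of `F₂ = ⟨a, b⟩` (with `a = of true`, `b = of false`):
`φ(a) = ab`, `φ(b) = ba`. -/
noncomputable def sapir : Monoid.End (FreeGroup Bool) :=
  FreeGroup.lift fun x =>
    if x then FreeGroup.of true * FreeGroup.of false
    else FreeGroup.of false * FreeGroup.of true

/-!
Up to conjugacy, `g` is a nonempty cyclically reduced word `w`. The endomorphism `φ` sends every
letter to a pair `y, flip y` (same exponent, other generator) and creates no cancellation, and
conjugate cyclically reduced words are rotations of each other, so `φ^k(g) ~ g^d` makes `φ^k(w)` a
rotation of `w^d`; comparing lengths, `d = 2^k`.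

Rotation periods of `φ^k(w)` descend to `w`. An even rotation `2m` of `φ(v)` is `φ` of the
rotation `m` of `v`. An odd rotation cannot fix `φ(v)`: it would match every pair `y, flip y`
against a pair `flip y', y''`, which forces `v` to be constant and then `y = flip y`. So if `p` is a
rotation period of `w`, it is one of `w^(2^k)`, hence of `φ^k(w)`, hence `p / 2^k` is a smaller
period of `w`.
-/

open Function List

namespace List

variable {α β : Type*}

theorem flatMap_rotate {b : α → List β} {c : ℕ} (hb : ∀ x, (b x).length = c) (l : List α)
    (r : ℕ) : (l.rotate r).flatMap b = (l.flatMap b).rotate (c * r) := by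
  induction r generalizing l with
  | zero => simp
  | succ r ih =>
    have rotate_one : (l.rotate 1).flatMap b = (l.flatMap b).rotate c := by
      cases l with
      | nil => simp
      | cons x t => simpa [hb] using (rotate_append_length_eq (b x) (t.flatMap b)).symm
    rw [show l.rotate (r + 1) = (l.rotate 1).rotate r by rw [rotate_rotate, add_comm], ih,
      rotate_one, rotate_rotate, mul_add_one, add_comm]

theorem rotate_eq_self_iff_take_append_comm {l : List α} {n : ℕ} (hn : n ≤ l.length) :
    l.rotate n = l ↔ l.take n ++ l = l ++ l.take n := by
  obtain ⟨a, b, rfl, rfl⟩ : ∃ a b, l = a ++ b ∧ a.length = n :=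
    ⟨_, _, (take_append_drop n l).symm, length_take_of_le hn⟩
  rw [take_left, rotate_append_length_eq, append_assoc, append_cancel_left_eq, eq_comm]

theorem append_comm_flatten_replicate {a l : List α} (h : a ++ l = l ++ a) (d : ℕ) :
    a ++ (replicate d l).flatten = (replicate d l).flatten ++ a := by
  induction d with
  | zero => simp
  | succ d ih => rw [replicate_succ, flatten_cons, ← append_assoc, h, append_assoc, ih,
      append_assoc]

theorem rotate_flatten_replicate_of_rotate_eq {l : List α} {n : ℕ} (hn : n ≤ l.length)
    (h : l.rotate n = l) (d : ℕ) :
    (replicate d l).flatten.rotate n = (replicate d l).flatten := by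
  cases d with
  | zero => simp
  | succ d =>
    have hlen : n ≤ (replicate (d + 1) l).flatten.length := by
      simp only [length_flatten, map_replicate, sum_replicate, smul_eq_mul]
      nlinarith
    have htake : (replicate (d + 1) l).flatten.take n = l.take n := by
      rw [replicate_succ, flatten_cons, take_append_of_le_length hn]
    rw [rotate_eq_self_iff_take_append_comm hlen, htake]
    exact append_comm_flatten_replicate ((rotate_eq_self_iff_take_append_comm hn).1 h) _

theorem IsRotated.rotate_eq_self {l l' : List α} (h : l ~r l') {n : ℕ}
    (hn : l'.rotate n = l') : l.rotate n = l := by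
  obtain ⟨r, rfl⟩ := h.symm
  rw [rotate_rotate, add_comm, ← rotate_rotate, hn]

end List

section PairSubst

variable {α : Type*}

def pairSubst (f g : α → α) (l : List α) : List α := l.flatMap fun x => [g x, f (g x)]

variable {f g : α → α}

@[simp] theorem pairSubst_nil : pairSubst f g [] = [] := rfl

@[simp] theorem pairSubst_cons (x : α) (l : List α) :
    pairSubst f g (x :: l) = g x :: f (g x) :: pairSubst f g l := rfl

theorem pairSubst_append (l l' : List α) :
    pairSubst f g (l ++ l') = pairSubst f g l ++ pairSubst f g l' :=
  flatMap_append

@[simp] theorem length_pairSubst (l : List α) : (pairSubst f g l).length = 2 * l.length := by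
  induction l with
  | nil => rfl
  | cons x l ih => rw [pairSubst_cons, length_cons, length_cons, ih, length_cons]; ring

theorem length_iterate_pairSubst (k : ℕ) (l : List α) :
    ((pairSubst f g)^[k] l).length = 2 ^ k * l.length := by
  induction k with
  | zero => simp
  | succ k ih => rw [iterate_succ_apply', length_pairSubst, ih, pow_succ]; ring

theorem iterate_pairSubst_ne_nil {l : List α} (hl : l ≠ []) (k : ℕ) :
    (pairSubst f g)^[k] l ≠ [] := by
  rw [← length_pos_iff, length_iterate_pairSubst]
  exact Nat.mul_pos (by positivity) (length_pos_iff.2 hl)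

theorem pairSubst_rotate (l : List α) (r : ℕ) :
    pairSubst f g (l.rotate r) = (pairSubst f g l).rotate (2 * r) :=
  flatMap_rotate (b := fun x => [g x, f (g x)]) (fun _ => rfl) l r

theorem pairSubst_injective (hg : Injective g) : Injective (pairSubst f g) := by
  intro l l' h
  induction l generalizing l' with
  | nil => cases l' <;> simp_all
  | cons x l ih =>
    cases l' with
    | nil => simp at h
    | cons y l' =>
      simp only [pairSubst_cons, cons.injEq] at h
      rw [hg h.1, ih h.2.2]

theorem forall_eq_of_pairSubst_eq_cons_append (hf : Involutive f) (hg : Injective g) {x : α} :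
    ∀ {l l' : List α}, pairSubst f g l' = f (g x) :: (pairSubst f g l ++ [g x]) →
      ∀ y ∈ l, y = x
  | [], _, _ => by simp
  | y :: l, [], h => by simp at h
  | y :: l, z :: l', h => by
    simp only [pairSubst_cons, cons_append, cons.injEq] at h
    obtain ⟨hz, hzy, h⟩ := h
    have hyx : y = x := hg (by rw [← hzy, hz, hf])
    subst hyx
    exact forall_mem_cons.2 ⟨rfl, forall_eq_of_pairSubst_eq_cons_append hf hg h⟩

theorem pairSubst_rotate_ne_of_odd (hf : Involutive f) (hfix : ∀ y, f y ≠ y)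
    (hg : Injective g) {l : List α} (hl : l ≠ []) {m : ℕ} (hm : Odd m) :
    (pairSubst f g l).rotate m ≠ pairSubst f g l := by
  intro h
  obtain ⟨q, rfl⟩ := hm
  obtain ⟨x, l, rfl⟩ := exists_cons_of_ne_nil hl
  have hrot : pairSubst f g ((x :: l).rotate (q + 1)) =
      f (g x) :: (pairSubst f g l ++ [g x]) := by
    rw [pairSubst_rotate, show 2 * (q + 1) = 2 * q + 1 + 1 by ring, ← rotate_rotate, h,
      pairSubst_cons]
    simp
  have hconst := forall_eq_of_pairSubst_eq_cons_append hf hg hrot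
  obtain ⟨y, l', hy⟩ := exists_cons_of_ne_nil (l := (x :: l).rotate (q + 1)) (by simp)
  rw [hy, pairSubst_cons, cons.injEq] at hrot
  have hyx : y = x :=
    (forall_mem_cons (p := (· = x))).2 ⟨rfl, hconst⟩ y (mem_rotate.1 (hy ▸ mem_cons_self))
  exact hfix _ (hyx ▸ hrot.1).symm

theorem exists_eq_two_pow_mul_of_rotate_iterate_pairSubst (hf : Involutive f)
    (hfix : ∀ y, f y ≠ y) (hg : Injective g) {l : List α} (hl : l ≠ []) :
    ∀ {k m : ℕ}, ((pairSubst f g)^[k] l).rotate m = (pairSubst f g)^[k] l →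
      ∃ r, m = 2 ^ k * r ∧ l.rotate r = l
  | 0, m, h => ⟨m, by simp, h⟩
  | k + 1, m, h => by
    rw [iterate_succ_apply'] at h
    obtain ⟨q, rfl⟩ : Even m := Nat.not_odd_iff_even.1 fun hm =>
      pairSubst_rotate_ne_of_odd hf hfix hg (iterate_pairSubst_ne_nil hl k) hm h
    have hq : ((pairSubst f g)^[k] l).rotate q = (pairSubst f g)^[k] l :=
      pairSubst_injective hg (by rw [pairSubst_rotate, two_mul, h])
    obtain ⟨r, rfl, hr⟩ := exists_eq_two_pow_mul_of_rotate_iterate_pairSubst hf hfix hg hl hq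
    exact ⟨r, by ring, hr⟩

theorem not_isRotated_iterate_pairSubst_flatten_replicate (hf : Involutive f)
    (hfix : ∀ y, f y ≠ y) (hg : Injective g) {l : List α} (hl : l ≠ []) {k : ℕ}
    (hk : k ≠ 0) :
    ¬ (pairSubst f g)^[k] l ~r (replicate (2 ^ k) l).flatten := by
  intro h
  suffices ∀ n, 0 < n → n ≤ l.length → l.rotate n ≠ l from
    this l.length (length_pos_iff.2 hl) le_rfl (rotate_length l)
  intro n
  induction n using Nat.strong_induction_on with
  | _ n ih =>
  intro hn hnl hrot
  obtain ⟨r, rfl, hr⟩ := exists_eq_two_pow_mul_of_rotate_iterate_pairSubst hf hfix hg hl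
    (h.rotate_eq_self (rotate_flatten_replicate_of_rotate_eq hnl hrot _))
  have hr0 : 0 < r := Nat.pos_of_mul_pos_left hn
  have hk2 : 2 ≤ 2 ^ k := Nat.le_self_pow hk 2
  exact ih r (by nlinarith) hr0 (by nlinarith) hr

end PairSubst

namespace FreeGroup

variable {α : Type*} {L L' u v : List (α × Bool)}

theorem reducedRel_iff_ne_inv {a b : α × Bool} :
    (a.1 = b.1 → a.2 = b.2) ↔ b ≠ (a.1, !a.2) := by
  obtain ⟨a1, a2⟩ := a
  obtain ⟨b1, b2⟩ := b
  cases a2 <;> cases b2 <;> simp [eq_comm]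

theorem isCyclicallyReduced_iff_isReduced_append_self :
    IsCyclicallyReduced L ↔ IsReduced (L ++ L) := by
  rw [isCyclicallyReduced_iff, IsReduced, IsReduced, isChain_append]
  tauto

theorem IsCyclicallyReduced.rotate (h : IsCyclicallyReduced L) (n : ℕ) :
    IsCyclicallyReduced (L.rotate n) := by
  rcases eq_or_ne L [] with rfl | hL
  · simp
  rw [isCyclicallyReduced_iff_isReduced_append_self] at h ⊢
  have h3 : IsReduced (L ++ L ++ L) := h.append_overlap h hL
  rw [← rotate_mod, rotate_eq_drop_append_take (Nat.mod_lt _ (length_pos_iff.2 hL)).le]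
  rw [← take_append_drop (n % L.length) L] at h3
  exact h3.infix ⟨take (n % L.length) L, drop (n % L.length) L, by simp only [append_assoc]⟩

theorem IsReduced.invRev [DecidableEq α] (h : IsReduced L) : IsReduced (invRev L) := by
  rw [isReduced_iff_reduce_eq, reduce_invRev, h.reduce_eq]

theorem IsReduced.eq_of_mk_eq (hL : IsReduced L) (hL' : IsReduced L') (h : mk L = mk L') :
    L = L' := by
  classical
  simpa [toWord_mk, hL.reduce_eq, hL'.reduce_eq] using congrArg toWord h

theorem not_isCyclicallyReduced_append_invRev {p : List (α × Bool)} (hp : p ≠ [])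
    (w : List (α × Bool)) : ¬ IsCyclicallyReduced (p ++ w ++ invRev p) := by
  obtain ⟨x, p, rfl⟩ := exists_cons_of_ne_nil hp
  intro h
  refine absurd (h.2 (x.1, !x.2) ?_ x (by simp) rfl) (by simp)
  rw [invRev_cons, ← append_assoc, getLast?_append_of_ne_nil _ (by simp [invRev])]
  simp [invRev]

theorem IsCyclicallyReduced.isRotated_of_mul_mul_inv_eq {c : List (α × Bool)}
    (hc : IsReduced c) (hu : IsCyclicallyReduced u) (hv : IsCyclicallyReduced v) (hu0 : u ≠ [])
    (h : mk c * mk u * (mk c)⁻¹ = mk v) : u ~r v := by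
  induction c using reverseRecOn generalizing u with
  | nil =>
    rw [← one_eq_mk, one_mul, inv_one, mul_one] at h
    rw [hu.isReduced.eq_of_mk_eq hv.isReduced h]
  | append_singleton c y ih =>
    have hc' : IsReduced c := hc.infix ⟨[], [y], by simp⟩
    have hy : mk [(y.1, !y.2)] = (mk [y])⁻¹ := by simp [inv_mk, invRev]
    by_cases hhead : u.head? = some (y.1, !y.2)
    · obtain ⟨u, rfl⟩ : ∃ u', u = (y.1, !y.2) :: u' := by
        obtain ⟨z, u', rfl⟩ := exists_cons_of_ne_nil hu0
        exact ⟨u', by simpa using hhead⟩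
      refine (IsRotated.forall _ 1).symm.trans (ih hc' (hu.rotate 1) (by simp) ?_)
      rw [← h, rotate_cons_succ, rotate_zero, ← mul_mk, ← mul_mk, hy,
        show (y.1, !y.2) :: u = [(y.1, !y.2)] ++ u from rfl, ← mul_mk, hy]
      group
    · by_cases hlast : u.getLast? = some y
      · obtain ⟨u, rfl⟩ : ∃ u', u = u' ++ [y] := by
          obtain ⟨u', z, rfl⟩ := eq_nil_or_concat u |>.resolve_left hu0
          exact ⟨u', by simpa using hlast⟩
        have hrot : u ++ [y] ~r y :: u := ⟨u.length, rotate_append_length_eq u [y]⟩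
        have hu' : IsCyclicallyReduced (y :: u) := by
          simpa [rotate_append_length_eq] using hu.rotate u.length
        refine hrot.trans (ih hc' hu' (by simp) ?_)
        rw [← h, ← mul_mk, ← mul_mk, show y :: u = [y] ++ u from rfl, ← mul_mk]
        group
      · -- Then `c ++ [y] ++ u ++ invRev (c ++ [y])` is reduced, so it is `v`.
        classical
        have hred : IsReduced (c ++ [y] ++ u ++ invRev (c ++ [y])) := by
          refine isChain_append.2 ⟨isChain_append.2 ⟨hc, hu.isReduced, ?_⟩, hc.invRev, ?_⟩
          · intro a ha b hb
            rw [getLast?_concat, Option.mem_some_iff] at ha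
            subst ha
            exact reducedRel_iff_ne_inv.2 fun hb' => hhead (hb' ▸ hb)
          · intro a ha b hb
            rw [getLast?_append_of_ne_nil _ hu0] at ha
            simp only [invRev, map_append, reverse_append, map_cons, map_nil, reverse_cons,
              reverse_nil, nil_append, cons_append, head?_cons, Option.mem_some_iff] at hb
            subst hb
            refine reducedRel_iff_ne_inv.2 fun he => hlast ?_
            obtain ⟨h1, h2⟩ := Prod.mk.inj he
            rw [Option.mem_def.1 ha, Prod.ext h1.symm (Bool.not_inj h2).symm]
        have hv' : v = c ++ [y] ++ u ++ invRev (c ++ [y]) :=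
          (hred.eq_of_mk_eq hv.isReduced (by rw [← h, inv_mk, mul_mk, mul_mk])).symm
        exact absurd (hv' ▸ hv) (not_isCyclicallyReduced_append_invRev (by simp) u)

theorem IsCyclicallyReduced.isRotated_of_isConj (hu : IsCyclicallyReduced u)
    (hv : IsCyclicallyReduced v) (hu0 : u ≠ []) (h : IsConj (mk u) (mk v)) : u ~r v := by
  classical
  obtain ⟨c, hc⟩ := isConj_iff.1 h
  exact hu.isRotated_of_mul_mul_inv_eq isReduced_toWord hv hu0 (by rwa [mk_toWord])

theorem exists_isCyclicallyReduced_isConj {x : FreeGroup α} (hx : x ≠ 1) :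
    ∃ w, IsCyclicallyReduced w ∧ w ≠ [] ∧ IsConj (mk w) x := by
  classical
  open reduceCyclically in
  have hx' : mk (conjugator x.toWord) * mk (reduceCyclically x.toWord) *
      (mk (conjugator x.toWord))⁻¹ = x := by
    rw [inv_mk, mul_mk, mul_mk, conj_conjugator_reduceCyclically, mk_toWord]
  refine ⟨_, reduceCyclically.isCyclicallyReduced isReduced_toWord, fun h => hx ?_,
    isConj_iff.2 ⟨_, hx'⟩⟩
  rw [← hx', h, ← one_eq_mk]
  group

end FreeGroup

-- `φ` sends the letter `x` to `sapirLead x` followed by `letterFlip (sapirLead x)`: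
-- `a ↦ ab`, `b ↦ ba`, `a⁻¹ ↦ b⁻¹a⁻¹`, `b⁻¹ ↦ a⁻¹b⁻¹`.
def letterFlip (x : Bool × Bool) : Bool × Bool := (!x.1, x.2)

def sapirLead : Bool × Bool → Bool × Bool
  | (a, true) => (a, true)
  | (a, false) => (!a, false)

theorem letterFlip_involutive : Involutive letterFlip := fun x => by simp [letterFlip]

theorem letterFlip_ne_self : ∀ x, letterFlip x ≠ x := by decide

theorem sapirLead_injective : Injective sapirLead := by decide

open FreeGroup

theorem sapir_of (a : Bool) : sapir (of a) = of a * of !a := by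
  cases a <;> exact lift_apply_of

theorem sapir_mk_singleton (x : Bool × Bool) :
    sapir (mk [x]) = mk [sapirLead x, letterFlip (sapirLead x)] := by
  obtain ⟨a, _ | _⟩ := x
  · rw [show mk [(a, false)] = (of a)⁻¹ from rfl, _root_.map_inv, sapir_of]
    simp [of, mul_mk, inv_mk, invRev, sapirLead, letterFlip]
  · rw [show mk [(a, true)] = of a from rfl, sapir_of]
    simp [of, mul_mk, sapirLead, letterFlip]

theorem sapir_mk (L : List (Bool × Bool)) :
    sapir (mk L) = mk (pairSubst letterFlip sapirLead L) := by
  induction L with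
  | nil => simp [← one_eq_mk]
  | cons x L ih =>
    rw [show x :: L = [x] ++ L from rfl, ← mul_mk, _root_.map_mul, ih, sapir_mk_singleton,
      pairSubst_append, ← mul_mk]
    rfl

theorem sapir_pow_mk (k : ℕ) (L : List (Bool × Bool)) :
    (sapir ^ k) (mk L) = mk ((pairSubst letterFlip sapirLead)^[k] L) := by
  rw [Monoid.End.coe_pow]
  induction k with
  | zero => rfl
  | succ k ih => rw [iterate_succ_apply', iterate_succ_apply', ih, sapir_mk]

theorem FreeGroup.IsReduced.pairSubst_letterFlip_sapirLead {L : List (Bool × Bool)}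
    (h : IsReduced L) : IsReduced (pairSubst letterFlip sapirLead L) := by
  have hblock : ∀ x : Bool × Bool, (sapirLead x).1 = (letterFlip (sapirLead x)).1 →
      (sapirLead x).2 = (letterFlip (sapirLead x)).2 := by decide
  have hjoin : ∀ x y : Bool × Bool, (x.1 = y.1 → x.2 = y.2) →
      (letterFlip (sapirLead x)).1 = (sapirLead y).1 →
        (letterFlip (sapirLead x)).2 = (sapirLead y).2 := by decide
  rw [IsReduced, pairSubst, flatMap_def, isChain_flatten (by simp), isChain_map]
  exact ⟨forall_mem_map.2 fun x _ => by simpa using hblock x,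
    h.imp fun x y hxy => by simpa using hjoin x y hxy⟩

theorem FreeGroup.IsCyclicallyReduced.iterate_pairSubst_letterFlip_sapirLead
    {L : List (Bool × Bool)} (h : IsCyclicallyReduced L) (k : ℕ) :
    IsCyclicallyReduced ((pairSubst letterFlip sapirLead)^[k] L) := by
  induction k with
  | zero => exact h
  | succ k ih =>
    rw [iterate_succ_apply', isCyclicallyReduced_iff_isReduced_append_self, ← pairSubst_append]
    exact (isCyclicallyReduced_iff_isReduced_append_self.1 ih).pairSubst_letterFlip_sapirLead

/-- No iterate of the Sapir endomorphism `φ(a) = ab`, `φ(b) = ba` of `F₂` maps a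
nontrivial element to a conjugate of one of its powers. -/
theorem sapir_no_invariant_conjugacy_class :
    ∀ k d : ℕ, 1 ≤ k → 1 ≤ d → ∀ g : FreeGroup Bool, g ≠ 1 →
      ¬ IsConj ((sapir ^ k) g) (g ^ d) := by
  intro k d hk _ g hg hconj
  obtain ⟨w, hw, hw0, hwg⟩ := exists_isCyclicallyReduced_isConj hg
  have hrot : (pairSubst letterFlip sapirLead)^[k] w ~r (replicate d w).flatten := by
    refine (hw.iterate_pairSubst_letterFlip_sapirLead k).isRotated_of_isConj
      (hw.flatten_replicate d) (iterate_pairSubst_ne_nil hw0 k) ?_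
    rw [← sapir_pow_mk, ← pow_mk]
    exact ((sapir ^ k).map_isConj hwg).trans (hconj.trans (hwg.pow d).symm)
  have hd : d = 2 ^ k := by
    have hlen := hrot.perm.length_eq
    simp only [length_iterate_pairSubst, length_flatten, map_replicate, sum_replicate,
      smul_eq_mul] at hlen
    exact (Nat.eq_of_mul_eq_mul_right (length_pos_iff.2 hw0) hlen).symm
  subst hd
  exact not_isRotated_iterate_pairSubst_flatten_replicate letterFlip_involutive
    letterFlip_ne_self sapirLead_injective hw0 (by omega) hrot
end
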